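/- For every natural number m ≥ 1, if P ∈ ℚ[X] satisfies P.eval n = ∑_{i=1}^{n} i^m for all n ∈ ℕ, then the coefficient of X^1 in P equals B'_m, the m-th Bernoulli number with the convention B'_1 = +1/2. -/

import Mathlib

/-!
Faulhaber's formula `∑_{i=1}^n i^m = ∑_{i ≤ m} B'_i (m+1 choose i) n^(m+1-i) / (m+1)` exhibits a
polynomial representing the power sums. Two polynomials over `ℚ` agreeing at infinitely many
points coincide, so `P` is this polynomial, and its only linear term is the one with `i = m`,
whose coefficient is `B'_m (m+1 choose m) / (m+1) = B'_m`.
-/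

open Finset Polynomial

theorem Polynomial.eq_of_eval_natCast_eq {R : Type*} [CommRing R] [IsDomain R] [CharZero R]
    {p q : R[X]} (h : ∀ n : ℕ, p.eval (n : R) = q.eval (n : R)) : p = q := by
  refine eq_of_infinite_eval_eq p q ((Set.infinite_range_of_injective Nat.cast_injective).mono ?_)
  rintro _ ⟨n, rfl⟩
  exact h n

noncomputable def faulhaberPoly (m : ℕ) : ℚ[X] :=
  ∑ i ∈ range (m + 1), C (bernoulli' i * (m + 1).choose i / (m + 1)) * X ^ (m + 1 - i)

theorem eval_faulhaberPoly (m n : ℕ) :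
    (faulhaberPoly m).eval (n : ℚ) = ∑ i ∈ Icc 1 n, (i : ℚ) ^ m := by
  rw [← Ico_add_one_right_eq_Icc, sum_Ico_pow, faulhaberPoly, eval_finsetSum]
  refine sum_congr rfl fun i _ => ?_
  simp only [eval_mul, eval_C, eval_pow, eval_X]
  ring

theorem coeff_faulhaberPoly_one (m : ℕ) : (faulhaberPoly m).coeff 1 = bernoulli' m := by
  rw [faulhaberPoly, finsetSum_coeff, sum_eq_single_of_mem m (self_mem_range_succ m)]
  · rw [coeff_C_mul_X_pow, if_pos (by omega), Nat.choose_succ_self_right]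
    push_cast
    field_simp
  · intro i hi him
    rw [coeff_C_mul_X_pow, if_neg]
    have := mem_range.mp hi
    omega

theorem stmt_4_general (m : ℕ) (P : ℚ[X])
    (hP : ∀ n : ℕ, P.eval (n : ℚ) = ∑ i ∈ Icc 1 n, (i : ℚ) ^ m) :
    P.coeff 1 = bernoulli' m := by
  have hP_eq : P = faulhaberPoly m :=
    eq_of_eval_natCast_eq fun n => (hP n).trans (eval_faulhaberPoly m n).symm
  rw [hP_eq, coeff_faulhaberPoly_one]

theorem stmt_4 (m : ℕ) (hm : 1 ≤ m) (P : ℚ[X])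
    (hP : ∀ n : ℕ, P.eval (n : ℚ) = ∑ i ∈ Icc 1 n, (i : ℚ) ^ m) :
    P.coeff 1 = bernoulli' m :=
  stmt_4_general m P hP
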